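/- Let $f, g, h$ be functions on $\Omega = M \times (-1,1)$ with $M = (0,L_1)\times(0,L_2)$ for which the following norms are finite. Then $\int_M (\int_{-1}^1 f\,dz)(\int_{-1}^1 g h\,dz)\,dM \le C \|f\|_2^{1/2}(\|f\|_2^{1/2} + \|\nabla f\|_2^{1/2})\|g\|_2\|h\|_2^{1/2}(\|h\|_2^{1/2} + \|\nabla h\|_2^{1/2})$, where $C$ depends only on $L_1, L_2$, norms are $L^2(\Omega)$, and $\nabla = (\partial_x, \partial_y)$. -/

import Mathlib

/-!
Write `F = ∫ f dz` and `P = ∫ g h dz` over `(-1, 1)`. Cauchy–Schwarz in `z` gives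
`|P| ≤ ‖g(x,y,·)‖ ‖h(x,y,·)‖` and `F² ≤ 2 ‖f(x,y,·)‖²`. The one-dimensional bound
`u(s)² ≤ ‖u‖² / L + 2 ∫ |u u'|`, applied in `y` to `f` and in `x` to `h`, bounds `F(x,y)²` by a
function of `x` alone and `∫ ‖h(x,y,·)‖² dy` by a constant. Hölder's inequality for the mixed
norms `L²_x L^∞_y`, `L^∞_x L²_y` and `L²` then bounds `∫_M F P`, and Cauchy–Schwarz on `Ω` turns
`∫ |w ∂w|` into `‖w‖ ‖∇w‖`.
-/

open MeasureTheory Set Function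

theorem sq_integral_mul_le {α : Type*} [MeasurableSpace α] {μ : Measure α} {u v : α → ℝ}
    (hu : Integrable (fun a => u a ^ 2) μ) (hv : Integrable (fun a => v a ^ 2) μ)
    (huv : Integrable (fun a => u a * v a) μ) :
    (∫ a, u a * v a ∂μ) ^ 2 ≤ (∫ a, u a ^ 2 ∂μ) * ∫ a, v a ^ 2 ∂μ := by
  have hquad : ∀ t : ℝ, 0 ≤ (∫ a, v a ^ 2 ∂μ) * (t * t) + (-2 * ∫ a, u a * v a ∂μ) * t
      + ∫ a, u a ^ 2 ∂μ := by
    intro t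
    have hexpand : (fun a => (u a - t * v a) ^ 2)
        = fun a => u a ^ 2 + ((-2 * t) * (u a * v a) + (t * t) * v a ^ 2) := by
      ext a; ring
    have hnonneg : 0 ≤ ∫ a, (u a - t * v a) ^ 2 ∂μ := integral_nonneg fun a => sq_nonneg _
    have hrest : Integrable (fun a => (-2 * t) * (u a * v a) + (t * t) * v a ^ 2) μ :=
      (huv.const_mul _).add (hv.const_mul _)
    rw [hexpand, integral_add hu hrest,
      integral_add (huv.const_mul _) (hv.const_mul _), integral_const_mul,
      integral_const_mul] at hnonneg
    linarith
  have hdisc := discrim_le_zero hquad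
  rw [discrim] at hdisc
  linarith

theorem abs_integral_mul_le_sqrt_mul_sqrt {α : Type*} [MeasurableSpace α] {μ : Measure α}
    {u v : α → ℝ} (hu : Integrable (fun a => u a ^ 2) μ) (hv : Integrable (fun a => v a ^ 2) μ)
    (huv : Integrable (fun a => u a * v a) μ) :
    |∫ a, u a * v a ∂μ| ≤ √(∫ a, u a ^ 2 ∂μ) * √(∫ a, v a ^ 2 ∂μ) := by
  rw [← Real.sqrt_mul (integral_nonneg fun a => sq_nonneg (u a))]
  exact Real.abs_le_sqrt (sq_integral_mul_le hu hv huv)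

theorem abs_intervalIntegral_mul_le_sqrt_mul_sqrt {u v : ℝ → ℝ} {a b : ℝ} (hab : a ≤ b)
    (hu : Continuous u) (hv : Continuous v) :
    |∫ t in a..b, u t * v t| ≤ √(∫ t in a..b, u t ^ 2) * √(∫ t in a..b, v t ^ 2) := by
  simp only [intervalIntegral.integral_of_le hab]
  exact abs_integral_mul_le_sqrt_mul_sqrt (hu.pow 2).integrableOn_Ioc (hv.pow 2).integrableOn_Ioc
    (hu.mul hv).integrableOn_Ioc

theorem abs_sq_sub_sq_le_intervalIntegral {u u' : ℝ → ℝ} (hu : ∀ t, HasDerivAt u (u' t) t)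
    (hu' : Continuous u') {a b s t : ℝ} (hs : s ∈ Icc a b) (ht : t ∈ Icc a b) :
    |u t ^ 2 - u s ^ 2| ≤ ∫ r in a..b, 2 * |u r * u' r| := by
  wlog hst : s ≤ t generalizing s t
  · rw [abs_sub_comm]
    exact this ht hs (le_of_not_ge hst)
  have hc : Continuous u := continuous_iff_continuousAt.2 fun t => (hu t).continuousAt
  have hftc : ∫ r in s..t, 2 * (u r * u' r) = u t ^ 2 - u s ^ 2 :=
    intervalIntegral.integral_eq_sub_of_hasDerivAt (f := fun r => u r ^ 2)
      (fun r _ => by simpa [mul_assoc] using (hu r).fun_pow 2)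
      ((by fun_prop : Continuous fun r => 2 * (u r * u' r)).intervalIntegrable _ _)
  rw [← hftc]
  refine (intervalIntegral.abs_integral_le_integral_abs hst).trans ?_
  simp only [abs_mul (2 : ℝ), abs_two]
  exact intervalIntegral.integral_mono_interval hs.1 hst ht.2
    (Filter.Eventually.of_forall fun r => mul_nonneg zero_le_two (abs_nonneg _))
    ((by fun_prop : Continuous _).intervalIntegrable _ _)

theorem sq_le_intervalIntegral_of_hasDerivAt {u u' : ℝ → ℝ} {a b x : ℝ} (hab : a < b)
    (hx : x ∈ Icc a b) (hu : ∀ t, HasDerivAt u (u' t) t) (hu' : Continuous u') :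
    u x ^ 2 ≤ ∫ t in a..b, ((b - a)⁻¹ * u t ^ 2 + 2 * |u t * u' t|) := by
  have hc : Continuous u := continuous_iff_continuousAt.2 fun t => (hu t).continuousAt
  have hba : 0 < b - a := sub_pos.2 hab
  set c := ∫ t in a..b, 2 * |u t * u' t|
  calc u x ^ 2 = ∫ _ in a..b, (b - a)⁻¹ * u x ^ 2 := by
        rw [intervalIntegral.integral_const, smul_eq_mul, mul_inv_cancel_left₀ hba.ne']
    _ ≤ ∫ t in a..b, ((b - a)⁻¹ * u t ^ 2 + (b - a)⁻¹ * c) := by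
        refine intervalIntegral.integral_mono_on hab.le
          ((by fun_prop : Continuous _).intervalIntegrable _ _)
          ((by fun_prop : Continuous _).intervalIntegrable _ _) fun t ht => ?_
        rw [← mul_add]
        gcongr
        linarith [(abs_sub_le_iff.1 (abs_sq_sub_sq_le_intervalIntegral hu hu' ht hx)).1]
    _ = ∫ t in a..b, ((b - a)⁻¹ * u t ^ 2 + 2 * |u t * u' t|) := by
        rw [intervalIntegral.integral_add ((by fun_prop : Continuous _).intervalIntegrable _ _)
            ((by fun_prop : Continuous _).intervalIntegrable _ _),
          intervalIntegral.integral_add ((by fun_prop : Continuous _).intervalIntegrable _ _)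
            ((by fun_prop : Continuous _).intervalIntegrable _ _),
          intervalIntegral.integral_const, smul_eq_mul, mul_inv_cancel_left₀ hba.ne']

theorem Continuous.integrableOn_of_isBounded {X E : Type*} [MetricSpace X] [ProperSpace X]
    [MeasurableSpace X] [BorelSpace X] [NormedAddCommGroup E] {μ : Measure X}
    [IsFiniteMeasureOnCompacts μ] {w : X → E} (hw : Continuous w) {s : Set X}
    (hs : Bornology.IsBounded s) :
    IntegrableOn w s μ :=
  (hw.continuousOn.integrableOn_compact hs.isCompact_closure).mono_set subset_closure

theorem intervalIntegral_swap_of_continuous {E : Type*} [NormedAddCommGroup E] [NormedSpace ℝ E]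
    {F : ℝ → ℝ → E} (hF : Continuous (uncurry F)) (a b c d : ℝ) :
    ∫ x in a..b, ∫ y in c..d, F x y = ∫ y in c..d, ∫ x in a..b, F x y :=
  intervalIntegral_intervalIntegral_swap <| hF.integrableOn_of_isBounded <|
    Metric.isBounded_Ioc _ _ |>.prod (Metric.isBounded_Ioc _ _)

theorem intervalIntegral_intervalIntegral_mono_on {F G : ℝ → ℝ → ℝ}
    (hF : Continuous (uncurry F)) (hG : Continuous (uncurry G)) {a b c d : ℝ} (hab : a ≤ b)
    (hcd : c ≤ d) (hFG : ∀ x ∈ Icc a b, ∀ y ∈ Icc c d, F x y ≤ G x y) :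
    ∫ x in a..b, ∫ y in c..d, F x y ≤ ∫ x in a..b, ∫ y in c..d, G x y :=
  intervalIntegral.integral_mono_on hab
    ((by fun_prop : Continuous _).intervalIntegrable _ _)
    ((by fun_prop : Continuous _).intervalIntegrable _ _) fun x hx =>
  intervalIntegral.integral_mono_on hcd
    ((by fun_prop : Continuous _).intervalIntegrable _ _)
    ((by fun_prop : Continuous _).intervalIntegrable _ _) (hFG x hx)

theorem setIntegral_Ioo_prod {α E : Type*} [MeasurableSpace α] [NormedAddCommGroup E]
    [NormedSpace ℝ E] {μ : Measure α} [SFinite μ] {a b : ℝ} (hab : a ≤ b) {t : Set α}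
    {w : ℝ × α → E} (hw : IntegrableOn w (Ioo a b ×ˢ t) (volume.prod μ)) :
    ∫ p in Ioo a b ×ˢ t, w p ∂(volume.prod μ) = ∫ x in a..b, ∫ y in t, w (x, y) ∂μ := by
  rw [setIntegral_prod _ hw, intervalIntegral.integral_of_le hab, integral_Ioc_eq_integral_Ioo]

theorem setIntegral_Ioo_prod_Ioo {E : Type*} [NormedAddCommGroup E] [NormedSpace ℝ E]
    {a b c d : ℝ} (hab : a ≤ b) (hcd : c ≤ d) {w : ℝ × ℝ → E} (hw : Continuous w) :
    ∫ p in Ioo a b ×ˢ Ioo c d, w p = ∫ x in a..b, ∫ y in c..d, w (x, y) := by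
  rw [Measure.volume_eq_prod, setIntegral_Ioo_prod hab]
  · simp only [intervalIntegral.integral_of_le hcd, integral_Ioc_eq_integral_Ioo]
  · rw [← Measure.volume_eq_prod]
    exact hw.integrableOn_of_isBounded ((Metric.isBounded_Ioo _ _).prod (Metric.isBounded_Ioo _ _))

theorem intervalIntegral_sqrt_mul_sqrt_le {F G : ℝ → ℝ} {a b : ℝ} (hab : a ≤ b)
    (hF : Continuous F) (hG : Continuous G) (hF₀ : ∀ t ∈ Icc a b, 0 ≤ F t)
    (hG₀ : ∀ t ∈ Icc a b, 0 ≤ G t) :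
    ∫ t in a..b, √(F t) * √(G t) ≤ √(∫ t in a..b, F t) * √(∫ t in a..b, G t) := by
  have hcs := abs_intervalIntegral_mul_le_sqrt_mul_sqrt hab (u := fun t => √(F t))
    (v := fun t => √(G t)) (by fun_prop) (by fun_prop)
  rw [intervalIntegral.integral_congr fun t ht => Real.sq_sqrt (hF₀ t (uIcc_of_le hab ▸ ht)),
    intervalIntegral.integral_congr fun t ht => Real.sq_sqrt (hG₀ t (uIcc_of_le hab ▸ ht))] at hcs
  exact (le_abs_self _).trans hcs

theorem intervalIntegral_abs_mul_sqrt_mul_sqrt_le {u V W : ℝ → ℝ} {a b A : ℝ} (hab : a ≤ b)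
    (hu : Continuous u) (hV : Continuous V) (hW : Continuous W)
    (hV₀ : ∀ t ∈ Icc a b, 0 ≤ V t) (hW₀ : ∀ t ∈ Icc a b, 0 ≤ W t)
    (huA : ∀ t ∈ Icc a b, u t ^ 2 ≤ A) :
    ∫ t in a..b, |u t| * √(V t) * √(W t) ≤
      √A * (√(∫ t in a..b, V t) * √(∫ t in a..b, W t)) :=
  calc ∫ t in a..b, |u t| * √(V t) * √(W t) ≤ ∫ t in a..b, √A * (√(V t) * √(W t)) :=
        intervalIntegral.integral_mono_on hab
          ((by fun_prop : Continuous _).intervalIntegrable _ _)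
          ((by fun_prop : Continuous _).intervalIntegrable _ _) fun t ht => by
            rw [mul_assoc]
            gcongr
            exact Real.abs_le_sqrt (huA t ht)
    _ = √A * ∫ t in a..b, √(V t) * √(W t) := intervalIntegral.integral_const_mul _ _
    _ ≤ _ := by
        gcongr
        exact intervalIntegral_sqrt_mul_sqrt_le hab hV hW hV₀ hW₀

theorem intervalIntegral_intervalIntegral_abs_mul_sqrt_mul_sqrt_le {u V W : ℝ × ℝ → ℝ}
    {A : ℝ → ℝ} {B a₁ b₁ a₂ b₂ : ℝ} (h₁ : a₁ ≤ b₁) (h₂ : a₂ ≤ b₂) (hu : Continuous u)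
    (hV : Continuous V) (hW : Continuous W) (hA : Continuous A) (hV₀ : ∀ q, 0 ≤ V q)
    (hW₀ : ∀ q, 0 ≤ W q) (huA : ∀ x ∈ Icc a₁ b₁, ∀ y ∈ Icc a₂ b₂, u (x, y) ^ 2 ≤ A x)
    (hVB : ∀ x ∈ Icc a₁ b₁, ∫ y in a₂..b₂, V (x, y) ≤ B) :
    ∫ x in a₁..b₁, ∫ y in a₂..b₂, |u (x, y)| * √(V (x, y)) * √(W (x, y)) ≤
      √(∫ x in a₁..b₁, A x) * √B * √(∫ x in a₁..b₁, ∫ y in a₂..b₂, W (x, y)) := by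
  have hA₀ : ∀ x ∈ Icc a₁ b₁, 0 ≤ A x := fun x hx =>
    (sq_nonneg _).trans (huA x hx a₂ (left_mem_Icc.2 h₂))
  have hW₀' : ∀ x, 0 ≤ ∫ y in a₂..b₂, W (x, y) := fun x =>
    intervalIntegral.integral_nonneg h₂ fun y _ => hW₀ _
  calc ∫ x in a₁..b₁, ∫ y in a₂..b₂, |u (x, y)| * √(V (x, y)) * √(W (x, y))
      ≤ ∫ x in a₁..b₁, √B * (√(A x) * √(∫ y in a₂..b₂, W (x, y))) :=
        intervalIntegral.integral_mono_on h₁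
          ((by fun_prop : Continuous _).intervalIntegrable _ _)
          ((by fun_prop : Continuous _).intervalIntegrable _ _) fun x hx => by
            refine (intervalIntegral_abs_mul_sqrt_mul_sqrt_le h₂ (by fun_prop) (by fun_prop)
              (by fun_prop) (fun y _ => hV₀ _) (fun y _ => hW₀ _) (huA x hx)).trans ?_
            rw [mul_left_comm, ← mul_assoc, ← mul_assoc]
            gcongr
            exact hVB x hx
    _ = √B * ∫ x in a₁..b₁, √(A x) * √(∫ y in a₂..b₂, W (x, y)) :=
        intervalIntegral.integral_const_mul _ _
    _ ≤ √B * (√(∫ x in a₁..b₁, A x) * √(∫ x in a₁..b₁, ∫ y in a₂..b₂, W (x, y))) := by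
        gcongr
        exact intervalIntegral_sqrt_mul_sqrt_le h₁ hA (by fun_prop) hA₀ fun x _ => hW₀' x
    _ = _ := by ring

theorem sqrt_integral_sq_add_abs_mul_le {α : Type*} [MeasurableSpace α] {μ : Measure α}
    {w d D : α → ℝ} {c : ℝ} (hc : 0 ≤ c) (hw : Integrable (fun a => w a ^ 2) μ)
    (hd : Integrable (fun a => d a ^ 2) μ) (hwd : Integrable (fun a => w a * d a) μ)
    (hD : Integrable D μ) (hdD : ∀ a, d a ^ 2 ≤ D a) :
    √(∫ a, (c * w a ^ 2 + 2 * |w a * d a|) ∂μ) ≤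
      √(c + 2) * √√(∫ a, w a ^ 2 ∂μ) * (√√(∫ a, w a ^ 2 ∂μ) + √√(∫ a, D a ∂μ)) := by
  set N := √(∫ a, w a ^ 2 ∂μ)
  set G := √(∫ a, D a ∂μ)
  have hN : N ^ 2 = ∫ a, w a ^ 2 ∂μ := Real.sq_sqrt (integral_nonneg fun a => sq_nonneg _)
  have hwd' : ∫ a, |w a * d a| ∂μ ≤ N * G := by
    have hcs := abs_integral_mul_le_sqrt_mul_sqrt (u := fun a => |w a|) (v := fun a => |d a|)
      (by simpa only [sq_abs] using hw) (by simpa only [sq_abs] using hd)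
      (by simpa only [abs_mul] using hwd.abs)
    simp only [sq_abs, ← abs_mul] at hcs
    refine (le_abs_self _).trans (hcs.trans ?_)
    gcongr
    exact Real.sqrt_le_sqrt (integral_mono hd hD hdD)
  have hE : ∫ a, (c * w a ^ 2 + 2 * |w a * d a|) ∂μ ≤ (c + 2) * N * (√N + √G) ^ 2 := by
    rw [integral_add (hw.const_mul c) (hwd.abs.const_mul 2), integral_const_mul,
      integral_const_mul, ← hN]
    have hG : 0 ≤ G := Real.sqrt_nonneg _
    have hNG : N + G ≤ (√N + √G) ^ 2 := by
      rw [add_sq, Real.sq_sqrt (Real.sqrt_nonneg _), Real.sq_sqrt hG]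
      nlinarith [Real.sqrt_nonneg N, Real.sqrt_nonneg G]
    have hN₀ : 0 ≤ N := Real.sqrt_nonneg _
    nlinarith [mul_le_mul_of_nonneg_left hNG (mul_nonneg (by linarith : 0 ≤ c + 2) hN₀),
      mul_nonneg hc (mul_nonneg hN₀ hG), mul_nonneg hN₀ hN₀]
  calc √(∫ a, (c * w a ^ 2 + 2 * |w a * d a|) ∂μ) ≤ √((c + 2) * N * (√N + √G) ^ 2) :=
        Real.sqrt_le_sqrt hE
    _ = √(c + 2) * √N * (√N + √G) := by
        rw [Real.sqrt_mul (by positivity), Real.sqrt_mul (by positivity),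
          Real.sqrt_sq (by positivity)]

section ThinDomain

variable {L₁ L₂ : ℝ}

def thinDomain (L₁ L₂ : ℝ) : Set (ℝ × ℝ × ℝ) := Ioo 0 L₁ ×ˢ Ioo 0 L₂ ×ˢ Ioo (-1) 1

theorem Continuous.integrableOn_thinDomain {w : ℝ × ℝ × ℝ → ℝ} (hw : Continuous w) :
    IntegrableOn w (thinDomain L₁ L₂) :=
  hw.integrableOn_of_isBounded <| (Metric.isBounded_Ioo _ _).prod <|
    (Metric.isBounded_Ioo _ _).prod (Metric.isBounded_Ioo _ _)

theorem setIntegral_thinDomain (hL₁ : 0 ≤ L₁) (hL₂ : 0 ≤ L₂) {w : ℝ × ℝ × ℝ → ℝ}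
    (hw : Continuous w) :
    ∫ p in thinDomain L₁ L₂, w p = ∫ x in 0..L₁, ∫ y in 0..L₂, ∫ z in (-1 : ℝ)..1, w (x, y, z) := by
  have hint : IntegrableOn w (thinDomain L₁ L₂) := hw.integrableOn_thinDomain
  rw [thinDomain, Measure.volume_eq_prod] at hint ⊢
  rw [setIntegral_Ioo_prod hL₁ hint]
  refine intervalIntegral.integral_congr fun x _ => ?_
  exact setIntegral_Ioo_prod_Ioo hL₂ (by norm_num) (by fun_prop)

theorem setIntegral_thinDomain' (hL₁ : 0 ≤ L₁) (hL₂ : 0 ≤ L₂) {w : ℝ × ℝ × ℝ → ℝ}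
    (hw : Continuous w) :
    ∫ p in thinDomain L₁ L₂, w p = ∫ x in 0..L₁, ∫ z in (-1 : ℝ)..1, ∫ y in 0..L₂, w (x, y, z) := by
  rw [setIntegral_thinDomain hL₁ hL₂ hw]
  exact intervalIntegral.integral_congr fun x _ =>
    intervalIntegral_swap_of_continuous (by fun_prop) _ _ _ _

theorem sqrt_setIntegral_thinDomain_sq_add_abs_mul_le {w : ℝ × ℝ × ℝ → ℝ}
    (hw : ContDiff ℝ 1 w) {v : ℝ × ℝ × ℝ}
    (hv : ∀ p, fderiv ℝ w p v ^ 2 ≤ fderiv ℝ w p (1, 0, 0) ^ 2 + fderiv ℝ w p (0, 1, 0) ^ 2)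
    {L : ℝ} (hL : 0 ≤ L) :
    √(∫ p in thinDomain L₁ L₂, (L⁻¹ * w p ^ 2 + 2 * |w p * fderiv ℝ w p v|)) ≤
      √(L⁻¹ + 2) * √√(∫ p in thinDomain L₁ L₂, w p ^ 2) *
        (√√(∫ p in thinDomain L₁ L₂, w p ^ 2) +
          √√(∫ p in thinDomain L₁ L₂,
            (fderiv ℝ w p (1, 0, 0) ^ 2 + fderiv ℝ w p (0, 1, 0) ^ 2))) := by
  have := hw.continuous
  have := hw.continuous_fderiv one_ne_zero
  exact sqrt_integral_sq_add_abs_mul_le (inv_nonneg.2 hL)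
    (Continuous.integrableOn_thinDomain (by fun_prop))
    (Continuous.integrableOn_thinDomain (by fun_prop))
    (Continuous.integrableOn_thinDomain (by fun_prop))
    (Continuous.integrableOn_thinDomain (by fun_prop)) hv

theorem sq_le_intervalIntegral_fst {h : ℝ × ℝ × ℝ → ℝ} (hh : ContDiff ℝ 1 h) (hL₁ : 0 < L₁)
    {x : ℝ} (hx : x ∈ Icc 0 L₁) (y z : ℝ) :
    h (x, y, z) ^ 2 ≤ ∫ t in 0..L₁,
      (L₁⁻¹ * h (t, y, z) ^ 2 + 2 * |h (t, y, z) * fderiv ℝ h (t, y, z) (1, 0, 0)|) := by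
  simpa only [sub_zero] using sq_le_intervalIntegral_of_hasDerivAt (u := fun t => h (t, y, z))
    hL₁ hx (fun t => (hh.differentiable one_ne_zero _).hasFDerivAt.comp_hasDerivAt t
      ((hasDerivAt_id' t).prodMk ((hasDerivAt_const t y).prodMk (hasDerivAt_const t z))))
    ((hh.continuous_fderiv one_ne_zero).clm_apply continuous_const |>.comp (by fun_prop))

theorem sq_le_intervalIntegral_snd {f : ℝ × ℝ × ℝ → ℝ} (hf : ContDiff ℝ 1 f) (hL₂ : 0 < L₂)
    (x : ℝ) {y : ℝ} (hy : y ∈ Icc 0 L₂) (z : ℝ) :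
    f (x, y, z) ^ 2 ≤ ∫ t in 0..L₂,
      (L₂⁻¹ * f (x, t, z) ^ 2 + 2 * |f (x, t, z) * fderiv ℝ f (x, t, z) (0, 1, 0)|) := by
  simpa only [sub_zero] using sq_le_intervalIntegral_of_hasDerivAt (u := fun t => f (x, t, z))
    hL₂ hy (fun t => (hf.differentiable one_ne_zero _).hasFDerivAt.comp_hasDerivAt t
      ((hasDerivAt_const t x).prodMk ((hasDerivAt_id' t).prodMk (hasDerivAt_const t z))))
    ((hf.continuous_fderiv one_ne_zero).clm_apply continuous_const |>.comp (by fun_prop))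

theorem sq_intervalIntegral_vertical_le {f : ℝ × ℝ × ℝ → ℝ} (hf : ContDiff ℝ 1 f) (hL₂ : 0 < L₂)
    (x : ℝ) {y : ℝ} (hy : y ∈ Icc 0 L₂) :
    (∫ z in (-1 : ℝ)..1, f (x, y, z)) ^ 2 ≤ 2 * ∫ z in (-1 : ℝ)..1, ∫ t in 0..L₂,
      (L₂⁻¹ * f (x, t, z) ^ 2 + 2 * |f (x, t, z) * fderiv ℝ f (x, t, z) (0, 1, 0)|) := by
  have := hf.continuous
  have := hf.continuous_fderiv one_ne_zero
  have hcs := abs_intervalIntegral_mul_le_sqrt_mul_sqrt (a := -1) (b := 1) (by norm_num)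
    (u := fun z => f (x, y, z)) (v := fun _ => 1) (by fun_prop) continuous_const
  have hone : ∫ _ in (-1 : ℝ)..1, (1 : ℝ) ^ 2 = 2 := by norm_num
  rw [hone] at hcs
  simp only [mul_one] at hcs
  calc (∫ z in (-1 : ℝ)..1, f (x, y, z)) ^ 2 = |∫ z in (-1 : ℝ)..1, f (x, y, z)| ^ 2 :=
        (sq_abs _).symm
    _ ≤ (√(∫ z in (-1 : ℝ)..1, f (x, y, z) ^ 2) * √2) ^ 2 := by gcongr
    _ = 2 * ∫ z in (-1 : ℝ)..1, f (x, y, z) ^ 2 := by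
        rw [mul_pow, Real.sq_sqrt zero_le_two,
          Real.sq_sqrt (intervalIntegral.integral_nonneg (by norm_num) fun z _ => sq_nonneg _)]
        ring
    _ ≤ _ := by
        gcongr
        exact intervalIntegral.integral_mono_on (by norm_num)
          ((by fun_prop : Continuous _).intervalIntegrable _ _)
          ((by fun_prop : Continuous _).intervalIntegrable _ _)
          fun z _ => sq_le_intervalIntegral_snd hf hL₂ x hy z

theorem intervalIntegral_vertical_sq_le {h : ℝ × ℝ × ℝ → ℝ} (hh : ContDiff ℝ 1 h) (hL₁ : 0 < L₁)
    (hL₂ : 0 ≤ L₂) {x : ℝ} (hx : x ∈ Icc 0 L₁) :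
    ∫ y in 0..L₂, ∫ z in (-1 : ℝ)..1, h (x, y, z) ^ 2 ≤
      ∫ p in thinDomain L₁ L₂, (L₁⁻¹ * h p ^ 2 + 2 * |h p * fderiv ℝ h p (1, 0, 0)|) := by
  have := hh.continuous
  have := hh.continuous_fderiv one_ne_zero
  rw [setIntegral_thinDomain hL₁.le hL₂ (by fun_prop)]
  calc ∫ y in 0..L₂, ∫ z in (-1 : ℝ)..1, h (x, y, z) ^ 2
      ≤ ∫ y in 0..L₂, ∫ z in (-1 : ℝ)..1, ∫ t in 0..L₁,
          (L₁⁻¹ * h (t, y, z) ^ 2 + 2 * |h (t, y, z) * fderiv ℝ h (t, y, z) (1, 0, 0)|) :=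
        intervalIntegral_intervalIntegral_mono_on (by fun_prop) (by fun_prop) hL₂ (by norm_num)
          fun y _ z _ => sq_le_intervalIntegral_fst hh hL₁ hx y z
    _ = ∫ y in 0..L₂, ∫ t in 0..L₁, ∫ z in (-1 : ℝ)..1,
          (L₁⁻¹ * h (t, y, z) ^ 2 + 2 * |h (t, y, z) * fderiv ℝ h (t, y, z) (1, 0, 0)|) :=
        intervalIntegral.integral_congr fun y _ =>
          intervalIntegral_swap_of_continuous (by fun_prop) _ _ _ _
    _ = _ := intervalIntegral_swap_of_continuous (by fun_prop) _ _ _ _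

theorem integral_vertical_mul_vertical_le {f g h : ℝ × ℝ × ℝ → ℝ} (hf : ContDiff ℝ 1 f)
    (hg : ContDiff ℝ 1 g) (hh : ContDiff ℝ 1 h) (hL₁ : 0 < L₁) (hL₂ : 0 < L₂) :
    ∫ q in Ioo 0 L₁ ×ˢ Ioo 0 L₂, (∫ z in (-1 : ℝ)..1, f (q.1, q.2, z)) *
        (∫ z in (-1 : ℝ)..1, g (q.1, q.2, z) * h (q.1, q.2, z)) ≤
      √(2 * ∫ p in thinDomain L₁ L₂, (L₂⁻¹ * f p ^ 2 + 2 * |f p * fderiv ℝ f p (0, 1, 0)|)) *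
      √(∫ p in thinDomain L₁ L₂, (L₁⁻¹ * h p ^ 2 + 2 * |h p * fderiv ℝ h p (1, 0, 0)|)) *
      √(∫ p in thinDomain L₁ L₂, g p ^ 2) := by
  have := hf.continuous
  have := hg.continuous
  have := hh.continuous
  have := hf.continuous_fderiv one_ne_zero
  rw [setIntegral_Ioo_prod_Ioo hL₁.le hL₂.le (by fun_prop)]
  calc _ ≤ ∫ x in 0..L₁, ∫ y in 0..L₂, |∫ z in (-1 : ℝ)..1, f (x, y, z)| *
          √(∫ z in (-1 : ℝ)..1, h (x, y, z) ^ 2) * √(∫ z in (-1 : ℝ)..1, g (x, y, z) ^ 2) := by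
        refine intervalIntegral_intervalIntegral_mono_on (by fun_prop) (by fun_prop) hL₁.le hL₂.le
          fun x _ y _ => (le_abs_self _).trans ?_
        rw [abs_mul, mul_assoc, mul_comm √_]
        gcongr
        exact abs_intervalIntegral_mul_le_sqrt_mul_sqrt (by norm_num) (by fun_prop) (by fun_prop)
    _ ≤ √(∫ x in 0..L₁, 2 * ∫ z in (-1 : ℝ)..1, ∫ t in 0..L₂,
          (L₂⁻¹ * f (x, t, z) ^ 2 + 2 * |f (x, t, z) * fderiv ℝ f (x, t, z) (0, 1, 0)|)) *
        √(∫ p in thinDomain L₁ L₂, (L₁⁻¹ * h p ^ 2 + 2 * |h p * fderiv ℝ h p (1, 0, 0)|)) *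
        √(∫ x in 0..L₁, ∫ y in 0..L₂, ∫ z in (-1 : ℝ)..1, g (x, y, z) ^ 2) :=
        intervalIntegral_intervalIntegral_abs_mul_sqrt_mul_sqrt_le
          (u := fun q => ∫ z in (-1 : ℝ)..1, f (q.1, q.2, z))
          (V := fun q => ∫ z in (-1 : ℝ)..1, h (q.1, q.2, z) ^ 2)
          (W := fun q => ∫ z in (-1 : ℝ)..1, g (q.1, q.2, z) ^ 2)
          (A := fun x => 2 * ∫ z in (-1 : ℝ)..1, ∫ t in 0..L₂,
            (L₂⁻¹ * f (x, t, z) ^ 2 + 2 * |f (x, t, z) * fderiv ℝ f (x, t, z) (0, 1, 0)|))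
          hL₁.le hL₂.le (by fun_prop) (by fun_prop) (by fun_prop) (by fun_prop)
          (fun q => intervalIntegral.integral_nonneg (by norm_num) fun z _ => sq_nonneg _)
          (fun q => intervalIntegral.integral_nonneg (by norm_num) fun z _ => sq_nonneg _)
          (fun x _ y hy => sq_intervalIntegral_vertical_le hf hL₂ x hy)
          fun x hx => intervalIntegral_vertical_sq_le hh hL₁ hL₂.le hx
    _ = _ := by
        rw [intervalIntegral.integral_const_mul, setIntegral_thinDomain' hL₁.le hL₂.le
          (w := fun p => L₂⁻¹ * f p ^ 2 + 2 * |f p * fderiv ℝ f p (0, 1, 0)|) (by fun_prop),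
          setIntegral_thinDomain hL₁.le hL₂.le (w := fun p => g p ^ 2) (by fun_prop)]

end ThinDomain

/-- The anisotropic Ladyzhenskaya-type inequality on the thin domain (Lemma 2.1). -/
theorem anisotropic_ladyzhenskaya (L1 L2 : ℝ) (hL1 : 0 < L1) (hL2 : 0 < L2) :
    ∃ C : ℝ, 0 < C ∧
      ∀ f g h : ℝ × ℝ × ℝ → ℝ, ContDiff ℝ 1 f → ContDiff ℝ 1 g → ContDiff ℝ 1 h →
        (let Ω : Set (ℝ × ℝ × ℝ) :=
          Set.Ioo 0 L1 ×ˢ Set.Ioo 0 L2 ×ˢ Set.Ioo (-1 : ℝ) 1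
        let M : Set (ℝ × ℝ) := Set.Ioo 0 L1 ×ˢ Set.Ioo 0 L2
        let n2 : (ℝ × ℝ × ℝ → ℝ) → ℝ := fun w =>
          Real.sqrt (∫ p in Ω, (w p) ^ 2)
        let ngrad : (ℝ × ℝ × ℝ → ℝ) → ℝ := fun w =>
          Real.sqrt (∫ p in Ω,
            ((fderiv ℝ w p (1, 0, 0)) ^ 2 + (fderiv ℝ w p (0, 1, 0)) ^ 2))
        (∫ q in M, (∫ z in (-1 : ℝ)..1, f (q.1, q.2, z)) *
            (∫ z in (-1 : ℝ)..1, g (q.1, q.2, z) * h (q.1, q.2, z))) ≤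
          C * Real.sqrt (n2 f) * (Real.sqrt (n2 f) + Real.sqrt (ngrad f)) *
            n2 g * Real.sqrt (n2 h) * (Real.sqrt (n2 h) + Real.sqrt (ngrad h))) := by
  refine ⟨√2 * √(L2⁻¹ + 2) * √(L1⁻¹ + 2), by positivity, fun f g h hf hg hh => ?_⟩
  have hfΩ := sqrt_setIntegral_thinDomain_sq_add_abs_mul_le (L₁ := L1) (L₂ := L2) hf
    (v := (0, 1, 0)) (fun p => le_add_of_nonneg_left (sq_nonneg _)) hL2.le
  have hhΩ := sqrt_setIntegral_thinDomain_sq_add_abs_mul_le (L₁ := L1) (L₂ := L2) hh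
    (v := (1, 0, 0)) (fun p => le_add_of_nonneg_right (sq_nonneg _)) hL1.le
  have hmain := integral_vertical_mul_vertical_le hf hg hh hL1 hL2
  rw [Real.sqrt_mul zero_le_two] at hmain
  unfold thinDomain at hfΩ hhΩ hmain
  dsimp only
  have hbound := mul_le_mul_of_nonneg_right (mul_le_mul
    (mul_le_mul_of_nonneg_left hfΩ (Real.sqrt_nonneg 2)) hhΩ (Real.sqrt_nonneg _) (by positivity))
    (Real.sqrt_nonneg (∫ p in Ioo 0 L1 ×ˢ Ioo 0 L2 ×ˢ Ioo (-1) 1, g p ^ 2))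
  calc _ ≤ _ := hmain
    _ ≤ _ := hbound
    _ = _ := by ring
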